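/- arXiv:1103.5047 — 7 statements merged into one kernel-verified Lean document; each statement's English description precedes it below -/
import Mathlib

section
/- Let n_1, n_2, n_3, n_4 be pairwise distinct reals and let (N_1, N_2, N_3, N_4) = (n_1^4, n_2^4, n_3^4, n_4^4) · A(n)^{−1}, i.e. the unique reals satisfying n_j^4 = N_1 + N_2 n_j + N_3 n_j^2 + N_4 n_j^3 for j = 1, …, 4. Then the row vector (n_1^5, n_2^5, n_3^5, n_4^5) · A(n)^{−1} has first component N_1N_4 and fourth component N_4^2 + N_3, and the row vector (n_1^6, n_2^6, n_3^6, n_4^6) · A(n)^{−1} has first component N_1(N_4^2 + N_3) and fourth component N_4^3 + 2N_4N_3 + N_2. -/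
/-- Let `n₁, n₂, n₃, n₄` be pairwise distinct reals and
`(N₁, N₂, N₃, N₄) = (n₁⁴, …, n₄⁴) · A(n)⁻¹`, i.e. the unique reals with
`n_j⁴ = N₁ + N₂ n_j + N₃ n_j² + N₄ n_j³` for all `j`.  Then
`(n₁⁵, …, n₄⁵) · A(n)⁻¹` has first component `N₁N₄` and fourth component `N₄² + N₃`, and
`(n₁⁶, …, n₄⁶) · A(n)⁻¹` has first component `N₁(N₄² + N₃)` and fourth component
`N₄³ + 2N₄N₃ + N₂`.  Here `A(n)` is the 4×4 Vandermonde matrix with `(i,j)` entry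
`n_j^(i-1)`. -/
theorem stmt_4 (n : Fin 4 → ℝ) (hn : Function.Injective n) (N : Fin 4 → ℝ)
    (hN : ∀ j, n j ^ 4 = N 0 + N 1 * n j + N 2 * n j ^ 2 + N 3 * n j ^ 3) :
    Matrix.vecMul (fun j => n j ^ 5) (Matrix.of fun i j : Fin 4 => n j ^ (i : ℕ))⁻¹ 0
      = N 0 * N 3 ∧
    Matrix.vecMul (fun j => n j ^ 5) (Matrix.of fun i j : Fin 4 => n j ^ (i : ℕ))⁻¹ 3
      = N 3 ^ 2 + N 2 ∧
    Matrix.vecMul (fun j => n j ^ 6) (Matrix.of fun i j : Fin 4 => n j ^ (i : ℕ))⁻¹ 0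
      = N 0 * (N 3 ^ 2 + N 2) ∧
    Matrix.vecMul (fun j => n j ^ 6) (Matrix.of fun i j : Fin 4 => n j ^ (i : ℕ))⁻¹ 3
      = N 3 ^ 3 + 2 * N 3 * N 2 + N 1 := by
  set M : Matrix (Fin 4) (Fin 4) ℝ := Matrix.of fun i j : Fin 4 => n j ^ (i : ℕ) with hM
  have hdet : M.det ≠ 0 := by
    have hT : M = (Matrix.vandermonde n).transpose := by
      ext i j
      simp [hM, Matrix.vandermonde, Matrix.transpose]
    rw [hT, Matrix.det_transpose]
    exact Matrix.det_vandermonde_ne_zero_iff.mpr hn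
  have key : ∀ w : Fin 4 → ℝ, Matrix.vecMul (Matrix.vecMul w M) M⁻¹ = w := by
    intro w
    rw [Matrix.vecMul_vecMul, Matrix.mul_nonsing_inv _ (Ne.isUnit hdet), Matrix.vecMul_one]
  have h5 : (fun j => n j ^ 5)
      = Matrix.vecMul ![N 0 * N 3, N 0 + N 3 * N 1, N 1 + N 3 * N 2, N 2 + N 3 ^ 2] M := by
    funext j
    simp [Matrix.vecMul, dotProduct, Fin.sum_univ_four, hM,
      (show ((0:Fin 4):ℕ)=0 from rfl), (show ((1:Fin 4):ℕ)=1 from rfl),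
      (show ((2:Fin 4):ℕ)=2 from rfl), (show ((3:Fin 4):ℕ)=3 from rfl)]
    linear_combination (n j + N 3) * hN j
  have h6 : (fun j => n j ^ 6)
      = Matrix.vecMul ![N 0 * (N 2 + N 3 ^ 2), N 0 * N 3 + (N 2 + N 3 ^ 2) * N 1,
          N 0 + N 3 * N 1 + (N 2 + N 3 ^ 2) * N 2,
          N 1 + N 3 * N 2 + (N 2 + N 3 ^ 2) * N 3] M := by
    funext j
    simp [Matrix.vecMul, dotProduct, Fin.sum_univ_four, hM,
      (show ((0:Fin 4):ℕ)=0 from rfl), (show ((1:Fin 4):ℕ)=1 from rfl),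
      (show ((2:Fin 4):ℕ)=2 from rfl), (show ((3:Fin 4):ℕ)=3 from rfl)]
    linear_combination (n j ^ 2 + N 3 * n j + (N 2 + N 3 ^ 2)) * hN j
  refine ⟨?_, ?_, ?_, ?_⟩
  · rw [h5, key]
    simp only [Matrix.cons_val_zero]
  · rw [h5, key]
    simp only [Matrix.cons_val_three, Matrix.head_cons, Matrix.head_fin_const,
      Matrix.cons_val_one, Matrix.cons_val_two, Matrix.tail_cons]
    ring
  · rw [h6, key]
    simp only [Matrix.cons_val_zero]
    ring
  · rw [h6, key]
    simp only [Matrix.cons_val_three, Matrix.head_cons, Matrix.head_fin_const,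
      Matrix.cons_val_one, Matrix.cons_val_two, Matrix.tail_cons]
    ring
end

section
/- Let a, b, c be any real numbers and set (m_1,m_2,m_3) = (−c, a, b), (n_1,n_2,n_3) = (c, −a, b), (r_1,r_2,r_3) = (c, −1, ab). Then the determinant of the 3×3 matrix with rows (M_5, M_3, 1), (N_5, N_3, 1), (R_5, R_3, 1) equals −2(c−a)(a−1)(b+1)(c−1+a(b−1)). -/
/-- For reals `a, b, c`, with the triples `m = (−c, a, b)`,
`n = (c, −a, b)`, `r = (c, −1, ab)` and, for a triple `s`,
`S₂ = −(s₁s₂ + s₁s₃ + s₂s₃)`, `S₃ = s₁ + s₂ + s₃`, `S₅ = S₃² + S₂`, the determinant of the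
3×3 matrix with rows `(M₅, M₃, 1)`, `(N₅, N₃, 1)`, `(R₅, R₃, 1)` equals
`−2(c−a)(a−1)(b+1)(c−1+a(b−1))`. -/
theorem stmt_6 (a b c : ℝ) :
    (!![((-c) + a + b) ^ 2 + -((-c) * a + (-c) * b + a * b), (-c) + a + b, 1;
        (c + (-a) + b) ^ 2 + -(c * (-a) + c * b + (-a) * b), c + (-a) + b, 1;
        (c + (-1) + a * b) ^ 2 + -(c * (-1) + c * (a * b) + (-1) * (a * b)),
          c + (-1) + a * b, 1] :
      Matrix (Fin 3) (Fin 3) ℝ).det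
      = -2 * (c - a) * (a - 1) * (b + 1) * (c - 1 + a * (b - 1)) := by
  rw [Matrix.det_fin_three]
  simp only [Matrix.of_apply, Matrix.cons_val', Matrix.cons_val_zero, Matrix.cons_val_one,
    Matrix.cons_val_two, Matrix.empty_val', Matrix.cons_val_fin_one, Matrix.head_cons,
    Matrix.tail_cons, Matrix.head_fin_const]
  ring
end

section
/- Let a, b, c be reals with abc ≠ 0, c ≠ a, a ≠ 1, b ≠ −1 and b ≠ c. Set (m_1,m_2,m_3) = (−c, a, b), (n_1,n_2,n_3) = (c, −a, b), (r_1,r_2,r_3) = (c, −1, ab), so that M_1 = N_1 = R_1 = −abc =: P. Then the matrix 𝐌 with rows (M_2, M_3, 1), (N_2, N_3, 1), (R_2, R_3, 1) is invertible, and the first component γ_1 of the unique solution of 𝐌(γ_1, y, z)^T = P·(M_5/20 − M_3^2/12, N_5/20 − N_3^2/12, R_5/20 − R_3^2/12)^T equals −(P/30)·(c−1+a(b−1))/(b−c) + P/12. In particular, γ_1 = P/8 if and only if (c−1+a(b−1))/(b−c) = −5/4. -/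
/-- The matrix `𝐌` with rows `(M₂, M₃, 1)`, `(N₂, N₃, 1)`, `(R₂, R₃, 1)` for the triples
`m = (−c, a, b)`, `n = (c, −a, b)`, `r = (c, −1, ab)`, where for a triple `s` we set
`S₂ = −(s₁s₂ + s₁s₃ + s₂s₃)` and `S₃ = s₁ + s₂ + s₃`. -/
noncomputable def Mmat7 (a b c : ℝ) : Matrix (Fin 3) (Fin 3) ℝ :=
  !![-((-c) * a + (-c) * b + a * b), (-c) + a + b, 1;
     -(c * (-a) + c * b + (-a) * b), c + (-a) + b, 1;
     -(c * (-1) + c * (a * b) + (-1) * (a * b)), c + (-1) + a * b, 1]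

/-- The right-hand-side vector `(M₅/20 − M₃²/12, N₅/20 − N₃²/12, R₅/20 − R₃²/12)`,
where `S₅ = S₃² + S₂` for each triple. -/
noncomputable def wvec7 (a b c : ℝ) : Fin 3 → ℝ :=
  ![(((-c) + a + b) ^ 2 + -((-c) * a + (-c) * b + a * b)) / 20 - ((-c) + a + b) ^ 2 / 12,
    ((c + (-a) + b) ^ 2 + -(c * (-a) + c * b + (-a) * b)) / 20 - (c + (-a) + b) ^ 2 / 12,
    ((c + (-1) + a * b) ^ 2 + -(c * (-1) + c * (a * b) + (-1) * (a * b))) / 20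
      - (c + (-1) + a * b) ^ 2 / 12]

/-- Let `a, b, c` be reals with `abc ≠ 0`, `c ≠ a`, `a ≠ 1`, `b ≠ −1`,
`b ≠ c`, and take the triples `m = (−c, a, b)`, `n = (c, −a, b)`, `r = (c, −1, ab)`, so
that `M₁ = N₁ = R₁ = −abc =: P`.  Then `𝐌` is invertible, and the first component `γ₁`
of the unique solution of `𝐌 (γ₁, y, z)ᵀ = P (M₅/20 − M₃²/12, N₅/20 − N₃²/12,
R₅/20 − R₃²/12)ᵀ` equals `−(P/30)·(c−1+a(b−1))/(b−c) + P/12`; in particular `γ₁ = P/8`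
iff `(c−1+a(b−1))/(b−c) = −5/4`. -/
theorem stmt_7 (a b c : ℝ) (h0 : a * b * c ≠ 0) (h1 : c ≠ a) (h2 : a ≠ 1) (h3 : b ≠ -1)
    (h4 : b ≠ c) :
    IsUnit (Mmat7 a b c) ∧
    ∀ γ₁ y z : ℝ, (Mmat7 a b c).mulVec ![γ₁, y, z] = (-(a * b * c)) • wvec7 a b c →
      (γ₁ = -((-(a * b * c)) / 30) * ((c - 1 + a * (b - 1)) / (b - c))
              + (-(a * b * c)) / 12 ∧
       (γ₁ = (-(a * b * c)) / 8 ↔ (c - 1 + a * (b - 1)) / (b - c) = -5 / 4)) := by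
  have ha1 : a - 1 ≠ 0 := sub_ne_zero.2 h2
  have hac : a - c ≠ 0 := sub_ne_zero.2 (Ne.symm h1)
  have hb1 : b + 1 ≠ 0 := fun h => h3 (by linarith)
  have hbc : b - c ≠ 0 := sub_ne_zero.2 h4
  have hdet : (Mmat7 a b c).det = 2 * (a - 1) * (a - c) * (b + 1) * (b - c) := by
    simp [Mmat7, Matrix.det_fin_three, Matrix.vecHead, Matrix.vecTail]; ring
  have hdne : (Mmat7 a b c).det ≠ 0 := by
    rw [hdet]
    exact mul_ne_zero (mul_ne_zero (mul_ne_zero (mul_ne_zero two_ne_zero ha1) hac) hb1) hbc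
  refine ⟨(Matrix.isUnit_iff_isUnit_det _).2 (isUnit_iff_ne_zero.2 hdne), ?_⟩
  intro γ₁ y z h
  set P : ℝ := -(a * b * c) with hP
  have hPne : P ≠ 0 := by simpa [hP] using h0
  have e0 := congrFun h 0
  have e1 := congrFun h 1
  have e2 := congrFun h 2
  simp [Mmat7, wvec7, Matrix.mulVec, dotProduct, Fin.sum_univ_three] at e0 e1 e2
  -- cofactor elimination of y and z
  have key : γ₁ * (2 * (a - 1) * (a - c) * (b + 1) * (b - c)) =
      P * ((((-c + a + b) ^ 2 + -((-c) * a + (-c) * b + a * b)) / 20 - (-c + a + b) ^ 2 / 12)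
            * ((c + -a + b) - (c + -1 + a * b))
          - (((c + -a + b) ^ 2 + -(c * (-a) + c * b + (-a) * b)) / 20 - (c + -a + b) ^ 2 / 12)
            * ((-c + a + b) - (c + -1 + a * b))
          + (((c + -1 + a * b) ^ 2 + -(c * (-1) + c * (a * b) + (-1) * (a * b))) / 20
              - (c + -1 + a * b) ^ 2 / 12)
            * ((-c + a + b) - (c + -a + b))) := by
    linear_combination ((c + -a + b) - (c + -1 + a * b)) * e0
      - ((-c + a + b) - (c + -1 + a * b)) * e1
      + ((-c + a + b) - (c + -a + b)) * e2
  have hg : γ₁ = -(P / 30) * ((c - 1 + a * (b - 1)) / (b - c)) + P / 12 := by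
    have hD : (2 : ℝ) * (a - 1) * (a - c) * (b + 1) * (b - c) ≠ 0 := hdet ▸ hdne
    apply mul_right_cancel₀ hD
    rw [key]
    field_simp
    ring
  refine ⟨hg, ?_⟩
  constructor
  · intro h8
    rw [hg] at h8
    have hz : P * ((c - 1 + a * (b - 1)) / (b - c) + 5 / 4) = 0 := by
      linear_combination (-30 : ℝ) * h8
    rcases mul_eq_zero.1 hz with h | h
    · exact absurd h hPne
    · linarith
  · intro hq
    rw [hg, hq]
    ring
end

section
/- Let (m_1,m_2,m_3), (n_1,n_2,n_3), (r_1,r_2,r_3) be triples of reals such that M_1 = N_1 = R_1 =: P, such that m_1^2 + m_2^2 + m_3^2 = n_1^2 + n_2^2 + n_3^2 = r_1^2 + r_2^2 + r_3^2, and such that the matrix 𝐌 with rows (M_2, M_3, 1), (N_2, N_3, 1), (R_2, R_3, 1) is invertible. Then the first component γ_1 of the unique solution of 𝐌(γ_1, y, z)^T = P·(M_5/20 − M_3^2/12, N_5/20 − N_3^2/12, R_5/20 − R_3^2/12)^T equals 7P/60. -/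
/-- `S₁ = s₁s₂s₃` for a triple of reals. -/
noncomputable def S1 (s : Fin 3 → ℝ) : ℝ := s 0 * s 1 * s 2

/-- `S₂ = −(s₁s₂ + s₁s₃ + s₂s₃)` for a triple of reals. -/
noncomputable def S2 (s : Fin 3 → ℝ) : ℝ := -(s 0 * s 1 + s 0 * s 2 + s 1 * s 2)

/-- `S₃ = s₁ + s₂ + s₃` for a triple of reals. -/
noncomputable def S3 (s : Fin 3 → ℝ) : ℝ := s 0 + s 1 + s 2

/-- `S₅ = S₃² + S₂` for a triple of reals. -/
noncomputable def S5 (s : Fin 3 → ℝ) : ℝ := S3 s ^ 2 + S2 s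

/-- Let `m, n, r` be triples of reals with `M₁ = N₁ = R₁ =: P`, equal
sums of squares `m₁² + m₂² + m₃² = n₁² + n₂² + n₃² = r₁² + r₂² + r₃²`, and such that the
matrix `𝐌` with rows `(M₂, M₃, 1)`, `(N₂, N₃, 1)`, `(R₂, R₃, 1)` is invertible.  Then the
first component `γ₁` of the unique solution of
`𝐌 (γ₁, y, z)ᵀ = P (M₅/20 − M₃²/12, N₅/20 − N₃²/12, R₅/20 − R₃²/12)ᵀ` equals `7P/60`. -/
theorem stmt_8 (m n r : Fin 3 → ℝ) (P : ℝ)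
    (hP1 : S1 m = P) (hP2 : S1 n = P) (hP3 : S1 r = P)
    (hsq1 : m 0 ^ 2 + m 1 ^ 2 + m 2 ^ 2 = n 0 ^ 2 + n 1 ^ 2 + n 2 ^ 2)
    (hsq2 : n 0 ^ 2 + n 1 ^ 2 + n 2 ^ 2 = r 0 ^ 2 + r 1 ^ 2 + r 2 ^ 2)
    (hM : IsUnit (!![S2 m, S3 m, 1; S2 n, S3 n, 1; S2 r, S3 r, 1] : Matrix (Fin 3) (Fin 3) ℝ)) :
    ∀ γ₁ y z : ℝ,
      (!![S2 m, S3 m, 1; S2 n, S3 n, 1; S2 r, S3 r, 1] : Matrix (Fin 3) (Fin 3) ℝ).mulVec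
          ![γ₁, y, z]
        = P • ![S5 m / 20 - S3 m ^ 2 / 12, S5 n / 20 - S3 n ^ 2 / 12,
                S5 r / 20 - S3 r ^ 2 / 12] →
      γ₁ = 7 * P / 60 := by
  intro γ₁ y z h
  set M : Matrix (Fin 3) (Fin 3) ℝ := !![S2 m, S3 m, 1; S2 n, S3 n, 1; S2 r, S3 r, 1] with hMdef
  set C : ℝ := m 0 ^ 2 + m 1 ^ 2 + m 2 ^ 2 with hC
  have hsqm : S3 m ^ 2 + 2 * S2 m = C := by simp [S3, S2, hC]; ring
  have hsqn : S3 n ^ 2 + 2 * S2 n = C := by simp [S3, S2, hC, hsq1]; ring_nf; linarith [hsq1]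
  have hsqr : S3 r ^ 2 + 2 * S2 r = C := by
    simp only [S3, S2, hC]; nlinarith [hsq1, hsq2]
  have hrhs : M.mulVec ![7 * P / 60, 0, -(P * C) / 30]
      = P • ![S5 m / 20 - S3 m ^ 2 / 12, S5 n / 20 - S3 n ^ 2 / 12,
              S5 r / 20 - S3 r ^ 2 / 12] := by
    funext i
    fin_cases i <;>
      simp [hMdef, Matrix.mulVec, dotProduct, Fin.sum_univ_three, S5]
    · linear_combination (P/30) * hsqm
    · linear_combination (P/30) * hsqn
    · linear_combination (P/30) * hsqr
  have hinj : Function.Injective M.mulVec :=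
    Matrix.mulVec_injective_iff_isUnit.2 hM
  have := hinj (h.trans hrhs.symm)
  have := congrFun this 0
  simpa using this
end

section
/- Let n ≥ 1 and let Γ: ℝ → ℝ^{n+1} be a C^∞ curve such that det(Γ(x), Γ'(x), …, Γ^{(n)}(x)) = 1 for all x ∈ ℝ. Then for every x, the vector Γ^{(n+1)}(x) lies in the linear span of Γ(x), Γ'(x), …, Γ^{(n−1)}(x); consequently there exist smooth functions k_0, …, k_{n−1}: ℝ → ℝ such that Γ^{(n+1)} + k_{n−1}Γ^{(n−1)} + ⋯ + k_1Γ' + k_0Γ = 0. -/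
/-!
Differentiating `det(Γ, Γ', …, Γ⁽ⁿ⁾) = 1` column by column, every term but the last repeats a
column, so `det(Γ, …, Γ⁽ⁿ⁻¹⁾, Γ⁽ⁿ⁺¹⁾) = 0`. By Cramer's rule this is exactly the coefficient of
`Γ⁽ⁿ⁾` when `Γ⁽ⁿ⁺¹⁾` is expanded in the frame `Γ, …, Γ⁽ⁿ⁾`; the other coefficients are
determinants of smooth columns, hence smooth.
-/

open Matrix Function
open scoped ContDiff

section DetRow

variable (𝕜 : Type*) [NontriviallyNormedField 𝕜] (ι : Type*) [Fintype ι] [DecidableEq ι]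

noncomputable def Matrix.detRowContinuousAlternating : (ι → 𝕜) [⋀^ι]→L[𝕜] 𝕜 :=
  { (detRowAlternating : (ι → 𝕜) [⋀^ι]→ₗ[𝕜] 𝕜) with cont := continuous_id.matrix_det }

variable {𝕜 ι}

theorem Matrix.det_updateCol_transpose_of (v : ι → ι → 𝕜) (j : ι) (c : ι → 𝕜) :
    ((of v)ᵀ.updateCol j c).det = detRowContinuousAlternating 𝕜 ι (update v j c) := by
  rw [updateCol_transpose, det_transpose]
  rfl

theorem hasDerivAt_det_transpose_of {v : 𝕜 → ι → ι → 𝕜} {v' : ι → ι → 𝕜} {x : 𝕜}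
    (hv : HasDerivAt v v' x) :
    HasDerivAt (fun y => (of (v y))ᵀ.det) (∑ j, ((of (v x))ᵀ.updateCol j (v' j)).det) x := by
  simp only [det_transpose, det_updateCol_transpose_of]
  have h := ((detRowContinuousAlternating 𝕜 ι).hasFDerivAt (v x)).comp_hasDerivAt x hv
  rwa [ContinuousMultilinearMap.linearDeriv_apply] at h

theorem contDiff_cramer_transpose_of {E : Type*} [NormedAddCommGroup E] [NormedSpace 𝕜 E]
    {k : WithTop ℕ∞} {v : E → ι → ι → 𝕜} {b : E → ι → 𝕜} (hv : ContDiff 𝕜 k v)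
    (hb : ContDiff 𝕜 k b) (j : ι) :
    ContDiff 𝕜 k fun x => cramer (of (v x))ᵀ (b x) j := by
  simp only [cramer_apply, det_updateCol_transpose_of]
  refine (detRowContinuousAlternating 𝕜 ι).contDiff.comp (contDiff_pi.2 fun i => ?_)
  rcases eq_or_ne i j with rfl | hij
  · simpa using hb
  · simpa [hij] using contDiff_pi.1 hv i

end DetRow

theorem Matrix.sum_cramer_smul_col {R ι : Type*} [CommRing R] [Fintype ι] [DecidableEq ι]
    (A : Matrix ι ι R) (b : ι → R) : ∑ j, cramer A b j • Aᵀ j = A.det • b := by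
  simp only [← mulVec_cramer, mulVec_eq_sum, op_smul_eq_smul]

section WronskiMatrix

variable {𝕜 : Type*} [NontriviallyNormedField 𝕜] {n : ℕ}

noncomputable def wronskiMatrix (Γ : 𝕜 → Fin (n + 1) → 𝕜) (x : 𝕜) :
    Matrix (Fin (n + 1)) (Fin (n + 1)) 𝕜 :=
  of fun i j => iteratedDeriv j Γ x i

variable {Γ : 𝕜 → Fin (n + 1) → 𝕜}

theorem hasDerivAt_det_wronskiMatrix (hΓ : ContDiff 𝕜 (n + 1) Γ) (x : 𝕜) :
    HasDerivAt (fun y => (wronskiMatrix Γ y).det)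
      ((wronskiMatrix Γ x).updateCol (Fin.last n) (iteratedDeriv (n + 1) Γ x)).det x := by
  have hframe : HasDerivAt (fun y (j : Fin (n + 1)) => iteratedDeriv j Γ y)
      (fun j => iteratedDeriv (j + 1) Γ x) x :=
    hasDerivAt_pi.2 fun j => by
      rw [iteratedDeriv_succ]
      exact (hΓ.differentiable_iteratedDeriv j (mod_cast j.is_lt)).differentiableAt.hasDerivAt
  have h : HasDerivAt (fun y => (wronskiMatrix Γ y).det)
      (∑ j, ((wronskiMatrix Γ x).updateCol j (iteratedDeriv (j + 1) Γ x)).det) x :=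
    hasDerivAt_det_transpose_of hframe
  -- Differentiating column `i < n` produces a copy of column `i + 1`.
  have hrepeat (i : Fin n) : ((wronskiMatrix Γ x).updateCol i.castSucc
      (iteratedDeriv (i + 1) Γ x)).det = 0 :=
    det_zero_of_column_eq Fin.castSucc_lt_succ.ne fun k => by
      rw [updateCol_self, updateCol_ne Fin.castSucc_lt_succ.ne']
      rfl
  simpa only [Fin.sum_univ_castSucc, Fin.val_castSucc, hrepeat, Finset.sum_const_zero, zero_add,
    Fin.val_last] using h

theorem det_updateCol_last_wronskiMatrix_eq_zero (hΓ : ContDiff 𝕜 (n + 1) Γ) {c : 𝕜}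
    (hdet : ∀ x, (wronskiMatrix Γ x).det = c) (x : 𝕜) :
    ((wronskiMatrix Γ x).updateCol (Fin.last n) (iteratedDeriv (n + 1) Γ x)).det = 0 := by
  have h := hasDerivAt_det_wronskiMatrix hΓ x
  rw [funext hdet] at h
  exact h.unique (hasDerivAt_const x c)

theorem sum_cramer_wronskiMatrix_smul_iteratedDeriv (hΓ : ContDiff 𝕜 (n + 1) Γ)
    (hdet : ∀ x, (wronskiMatrix Γ x).det = 1) (x : 𝕜) :
    ∑ i : Fin n, cramer (wronskiMatrix Γ x) (iteratedDeriv (n + 1) Γ x) i.castSucc •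
      iteratedDeriv i Γ x = iteratedDeriv (n + 1) Γ x := by
  have hlast : cramer (wronskiMatrix Γ x) (iteratedDeriv (n + 1) Γ x) (Fin.last n) = 0 := by
    rw [cramer_apply]
    exact det_updateCol_last_wronskiMatrix_eq_zero hΓ hdet x
  have h := sum_cramer_smul_col (wronskiMatrix Γ x) (iteratedDeriv (n + 1) Γ x)
  rwa [hdet x, one_smul, Fin.sum_univ_castSucc, hlast, zero_smul, add_zero] at h

theorem contDiff_cramer_wronskiMatrix (hΓ : ContDiff 𝕜 ∞ Γ) (j : Fin (n + 1)) :
    ContDiff 𝕜 ∞ fun x => cramer (wronskiMatrix Γ x) (iteratedDeriv (n + 1) Γ x) j := by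
  have hderiv (m : ℕ) : ContDiff 𝕜 ∞ (iteratedDeriv m Γ) := by
    rw [iteratedDeriv_eq_iterate]
    exact hΓ.iterate_deriv m
  exact contDiff_cramer_transpose_of (v := fun x (j : Fin (n + 1)) => iteratedDeriv j Γ x)
    (contDiff_pi.2 fun j => hderiv j) (hderiv (n + 1)) j

end WronskiMatrix

theorem stmt_11_general (n : ℕ) (Γ : ℝ → Fin (n + 1) → ℝ)
    (hΓ : ContDiff ℝ (⊤ : ℕ∞) Γ)
    (hdet : ∀ x : ℝ, (Matrix.of fun i j : Fin (n + 1) => iteratedDeriv (j : ℕ) Γ x i).det = 1) :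
    (∀ x : ℝ, iteratedDeriv (n + 1) Γ x ∈
        Submodule.span ℝ (Set.range fun i : Fin n => iteratedDeriv (i : ℕ) Γ x)) ∧
    ∃ k : Fin n → ℝ → ℝ, (∀ i, ContDiff ℝ (⊤ : ℕ∞) (k i)) ∧
      ∀ x : ℝ, iteratedDeriv (n + 1) Γ x
          + ∑ i : Fin n, k i x • iteratedDeriv (i : ℕ) Γ x = 0 := by
  have hrep := sum_cramer_wronskiMatrix_smul_iteratedDeriv (hΓ.of_le (mod_cast le_top)) hdet
  refine ⟨fun x => hrep x ▸ Submodule.sum_mem _ fun i _ =>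
      Submodule.smul_mem _ _ (Submodule.subset_span ⟨i, rfl⟩),
    fun i x => -cramer (wronskiMatrix Γ x) (iteratedDeriv (n + 1) Γ x) i.castSucc,
    fun i => (contDiff_cramer_wronskiMatrix hΓ i.castSucc).neg, fun x => ?_⟩
  simp only [neg_smul, Finset.sum_neg_distrib, hrep, add_neg_cancel]

/-- Let `n ≥ 1` and let `Γ : ℝ → ℝ^{n+1}` be a `C^∞` curve with
`det(Γ, Γ', …, Γ^{(n)}) = 1` everywhere.  Then `Γ^{(n+1)}(x)` always lies in the span of
`Γ(x), Γ'(x), …, Γ^{(n-1)}(x)`, and consequently there are smooth functions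
`k_0, …, k_{n-1} : ℝ → ℝ` (the Wilczynski invariants) with
`Γ^{(n+1)} + k_{n-1}Γ^{(n-1)} + ⋯ + k_1Γ' + k_0Γ = 0`. -/
theorem stmt_11 (n : ℕ) (hn : 1 ≤ n) (Γ : ℝ → Fin (n + 1) → ℝ)
    (hΓ : ContDiff ℝ (⊤ : ℕ∞) Γ)
    (hdet : ∀ x : ℝ, (Matrix.of fun i j : Fin (n + 1) => iteratedDeriv (j : ℕ) Γ x i).det = 1) :
    (∀ x : ℝ, iteratedDeriv (n + 1) Γ x ∈
        Submodule.span ℝ (Set.range fun i : Fin n => iteratedDeriv (i : ℕ) Γ x)) ∧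
    ∃ k : Fin n → ℝ → ℝ, (∀ i, ContDiff ℝ (⊤ : ℕ∞) (k i)) ∧
      ∀ x : ℝ, iteratedDeriv (n + 1) Γ x
          + ∑ i : Fin n, k i x • iteratedDeriv (i : ℕ) Γ x = 0 :=
  stmt_11_general n Γ hΓ hdet
end

section
/- Let n ≥ 1 and let k_0, …, k_{n−1}: ℝ → ℝ be smooth functions. Let K̂(x) be the (n+1)×(n+1) matrix whose subdiagonal entries (i+1, i), i = 1, …, n, equal 1, whose last column is (−k_0(x), −k_1(x), …, −k_{n−1}(x), 0)^T, and whose remaining entries are 0. Then there exist smooth functions κ_0, …, κ_{n−1}: ℝ → ℝ and a smooth map g: ℝ → GL(n+1, ℝ) taking values in upper triangular matrices with all diagonal entries equal to 1, such that g'(x) + K̂(x)g(x) = g(x)K(x) for all x ∈ ℝ, where K(x) is the (n+1)×(n+1) matrix with first row (0, κ_{n−1}(x), κ_{n−2}(x), …, κ_1(x), κ_0(x)), subdiagonal entries (i+1, i) equal to 1, and all other entries 0. -/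
/-- The Wilczynski (companion-type) Maurer–Cartan matrix `K̂(x)`: subdiagonal entries
`(i+1, i) = 1`, last column `(−k_0(x), …, −k_{n-1}(x), 0)ᵀ`, all other entries `0`. -/
noncomputable def KhatM (n : ℕ) (k : Fin n → ℝ → ℝ) (x : ℝ) :
    Matrix (Fin (n + 1)) (Fin (n + 1)) ℝ :=
  Matrix.of fun i j =>
    if (j : ℕ) = n then (if h : (i : ℕ) < n then -k ⟨i, h⟩ x else 0)
    else if (i : ℕ) = (j : ℕ) + 1 then 1 else 0

/-- The canonical matrix `K(x)`: first row `(0, κ_{n-1}(x), κ_{n-2}(x), …, κ_0(x))`,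
subdiagonal entries `(i+1, i) = 1`, all other entries `0`. -/
noncomputable def KcanM (n : ℕ) (κ : Fin n → ℝ → ℝ) (x : ℝ) :
    Matrix (Fin (n + 1)) (Fin (n + 1)) ℝ :=
  Matrix.of fun i j =>
    if (i : ℕ) = 0 then
      (if h : 1 ≤ (j : ℕ) then κ ⟨n - (j : ℕ), by have := j.isLt; omega⟩ x else 0)
    else if (i : ℕ) = (j : ℕ) + 1 then 1 else 0

/-- Entries of the gauge matrix, built column by column from the first row `φ`. -/
noncomputable def Aent (φ : ℕ → ℝ → ℝ) : ℕ → ℕ → ℝ → ℝ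
  | i, 0 => if i = 0 then φ 0 else fun _ => 0
  | 0, j + 1 => φ (j + 1)
  | i + 1, j + 1 => fun x => Aent φ i j x + deriv (Aent φ (i + 1) j) x

lemma Aent_zero_right (φ : ℕ → ℝ → ℝ) (i : ℕ) :
    Aent φ i 0 = if i = 0 then φ 0 else fun _ => 0 := by
  cases i <;> rfl

lemma Aent_zero_left (φ : ℕ → ℝ → ℝ) (j : ℕ) :
    Aent φ 0 (j + 1) = φ (j + 1) := rfl

lemma Aent_succ_succ (φ : ℕ → ℝ → ℝ) (i j : ℕ) :
    Aent φ (i + 1) (j + 1) = fun x => Aent φ i j x + deriv (Aent φ (i + 1) j) x := rfl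

/-- `Aent φ i j` only depends on `φ l` for `l + i ≤ j`. -/
lemma Aent_congr (φ ψ : ℕ → ℝ → ℝ) :
    ∀ j i, (∀ l, l + i ≤ j → φ l = ψ l) → Aent φ i j = Aent ψ i j := by
  intro j
  induction j with
  | zero =>
    intro i h
    rw [Aent_zero_right, Aent_zero_right]
    split
    · exact h 0 (by omega)
    · rfl
  | succ j ih =>
    intro i h
    cases i with
    | zero => rw [Aent_zero_left, Aent_zero_left]; exact h (j + 1) (by omega)
    | succ i =>
      rw [Aent_succ_succ, Aent_succ_succ,
        ih i (fun l hl => h l (by omega)),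
        ih (i + 1) (fun l hl => h l (by omega))]

lemma Aent_eq_zero (φ : ℕ → ℝ → ℝ) :
    ∀ j i, j < i → Aent φ i j = fun _ => 0 := by
  intro j
  induction j with
  | zero =>
    intro i h
    rw [Aent_zero_right, if_neg (by omega)]
  | succ j ih =>
    intro i h
    cases i with
    | zero => omega
    | succ i =>
      rw [Aent_succ_succ, ih i (by omega), ih (i + 1) (by omega)]
      funext x
      simp

lemma Aent_diag (φ : ℕ → ℝ → ℝ) (h0 : φ 0 = fun _ => 1) :
    ∀ j, Aent φ j j = fun _ => 1 := by
  intro j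
  induction j with
  | zero => rw [Aent_zero_right, if_pos rfl, h0]
  | succ j ih =>
    rw [Aent_succ_succ, ih, Aent_eq_zero φ j (j + 1) (by omega)]
    funext x
    simp

lemma Aent_superdiag (φ : ℕ → ℝ → ℝ) (h0 : φ 0 = fun _ => 1) (h1 : φ 1 = fun _ => 0) :
    ∀ i, Aent φ i (i + 1) = fun _ => 0 := by
  intro i
  induction i with
  | zero => rw [Aent_zero_left]; exact h1
  | succ i ih =>
    rw [Aent_succ_succ, ih, Aent_diag φ h0 (i + 1)]
    funext x
    simp

/-- `Aent` is "affine with coefficient 1" in `φ (j - i)`. -/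
lemma Aent_diff (φ ψ : ℕ → ℝ → ℝ) :
    ∀ j i, i ≤ j → (∀ l, l + i < j → φ l = ψ l) →
      Aent φ i j = fun x => Aent ψ i j x + (φ (j - i) x - ψ (j - i) x) := by
  intro j
  induction j with
  | zero =>
    intro i hij _
    obtain rfl : i = 0 := by omega
    rw [Aent_zero_right, Aent_zero_right, if_pos rfl, if_pos rfl]
    funext x; ring
  | succ j ih =>
    intro i hij h
    cases i with
    | zero =>
      rw [Aent_zero_left, Aent_zero_left]
      funext x
      rw [Nat.sub_zero]
      ring
    | succ i =>
      rw [Aent_succ_succ, Aent_succ_succ]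
      have hd : Aent φ (i + 1) j = Aent ψ (i + 1) j := by
        rcases Nat.lt_or_ge j (i + 1) with hj | hj
        · rw [Aent_eq_zero φ j (i + 1) hj, Aent_eq_zero ψ j (i + 1) hj]
        · exact Aent_congr φ ψ j (i + 1) (fun l hl => h l (by omega))
      rw [ih i (by omega) (fun l hl => h l (by omega)), hd]
      have : j + 1 - (i + 1) = j - i := by omega
      rw [this]
      funext x; ring

lemma Aent_smooth (φ : ℕ → ℝ → ℝ) (hφ : ∀ l, ContDiff ℝ (⊤ : ℕ∞) (φ l)) :
    ∀ j i, ContDiff ℝ (⊤ : ℕ∞) (Aent φ i j) := by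
  intro j
  induction j with
  | zero =>
    intro i
    rw [Aent_zero_right]
    split
    · exact hφ 0
    · exact contDiff_const
  | succ j ih =>
    intro i
    cases i with
    | zero => rw [Aent_zero_left]; exact hφ (j + 1)
    | succ i =>
      rw [Aent_succ_succ]
      exact (ih i).add (contDiff_infty_iff_deriv.mp (ih (i + 1))).2

/-- The sequence of first-row entries, built by strong recursion so that the
column-`n` compatibility equations hold. -/
noncomputable def PhiSeq (n : ℕ) (k : Fin n → ℝ → ℝ) : ℕ → ℕ → ℝ → ℝ
  | 0 => fun l => if l = 0 then fun _ => 1 else fun _ => 0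
  | m + 1 =>
    Function.update (PhiSeq n k m) (m + 1)
      (if h : 1 ≤ m ∧ m + 1 ≤ n then
        fun x => k ⟨n - m, by omega⟩ x - deriv (Aent (PhiSeq n k m) (n - m) n) x
          - Aent (PhiSeq n k m) (n - m - 1) n x
      else fun _ => 0)

noncomputable def phiF (n : ℕ) (k : Fin n → ℝ → ℝ) (l : ℕ) : ℝ → ℝ := PhiSeq n k l l

lemma PhiSeq_high (n : ℕ) (k : Fin n → ℝ → ℝ) :
    ∀ m l, m < l → PhiSeq n k m l = fun _ => 0 := by
  intro m
  induction m with
  | zero =>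
    intro l hl
    have h0 : PhiSeq n k 0 l = if l = 0 then (fun _ => (1 : ℝ)) else fun _ => 0 := rfl
    rw [h0, if_neg (by omega)]
  | succ m ih =>
    intro l hl
    rw [PhiSeq, Function.update_of_ne (by omega)]
    exact ih l (by omega)

lemma phiF_eq_PhiSeq (n : ℕ) (k : Fin n → ℝ → ℝ) :
    ∀ m l, l ≤ m → phiF n k l = PhiSeq n k m l := by
  intro m
  induction m with
  | zero =>
    intro l hl
    obtain rfl : l = 0 := Nat.le_zero.mp hl
    rfl
  | succ m ih =>
    intro l hl
    rcases Nat.lt_or_ge l (m + 1) with h | h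
    · rw [PhiSeq, Function.update_of_ne (by omega)]
      exact ih l (by omega)
    · obtain rfl : l = m + 1 := by omega
      rfl

lemma phiF_zero (n : ℕ) (k : Fin n → ℝ → ℝ) : phiF n k 0 = fun _ => 1 := rfl

lemma phiF_one (n : ℕ) (k : Fin n → ℝ → ℝ) : phiF n k 1 = fun _ => 0 := by
  show PhiSeq n k 1 1 = fun _ => 0
  rw [PhiSeq, Function.update_self, dif_neg (by omega)]

lemma PhiSeq_smooth (n : ℕ) (k : Fin n → ℝ → ℝ) (hk : ∀ i, ContDiff ℝ (⊤ : ℕ∞) (k i)) :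
    ∀ m l, ContDiff ℝ (⊤ : ℕ∞) (PhiSeq n k m l) := by
  intro m
  induction m with
  | zero =>
    intro l
    simp only [PhiSeq]
    split <;> exact contDiff_const
  | succ m ih =>
    intro l
    rcases eq_or_ne l (m + 1) with rfl | hne
    · rw [PhiSeq, Function.update_self]
      split
      · exact ((hk _).sub
          (contDiff_infty_iff_deriv.mp (Aent_smooth _ ih n _)).2).sub
          (Aent_smooth _ ih n _)
      · exact contDiff_const
    · rw [PhiSeq, Function.update_of_ne hne]
      exact ih l

lemma phiF_smooth (n : ℕ) (k : Fin n → ℝ → ℝ) (hk : ∀ i, ContDiff ℝ (⊤ : ℕ∞) (k i))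
    (l : ℕ) : ContDiff ℝ (⊤ : ℕ∞) (phiF n k l) :=
  PhiSeq_smooth n k hk l l

/-- The key compatibility identity in column `n`. -/
lemma Aent_constraint (n : ℕ) (k : Fin n → ℝ → ℝ) (i : ℕ) (hi1 : 1 ≤ i) (hi2 : i < n)
    (x : ℝ) :
    deriv (Aent (phiF n k) i n) x + Aent (phiF n k) (i - 1) n x
      = k ⟨i, hi2⟩ x := by
  set m : ℕ := n - i with hm
  have hmn : 1 ≤ m ∧ m + 1 ≤ n := by omega
  have hnm : n - m = i := by omega
  -- φ agrees with the stage-m sequence up to index m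
  have hagree : ∀ l, l ≤ m → phiF n k l = PhiSeq n k m l := fun l hl =>
    phiF_eq_PhiSeq n k m l hl
  have h1 : Aent (phiF n k) i n = Aent (PhiSeq n k m) i n :=
    Aent_congr _ _ n i (fun l hl => hagree l (by omega))
  have h2 : Aent (phiF n k) (i - 1) n
      = fun y => Aent (PhiSeq n k m) (i - 1) n y
          + (phiF n k (n - (i - 1)) y - PhiSeq n k m (n - (i - 1)) y) :=
    Aent_diff _ _ n (i - 1) (by omega) (fun l hl => hagree l (by omega))
  have hidx : n - (i - 1) = m + 1 := by omega
  have h3 : PhiSeq n k m (m + 1) = fun _ => 0 := PhiSeq_high n k m (m + 1) (by omega)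
  have h4 : phiF n k (m + 1)
      = fun y => k ⟨n - m, by omega⟩ y - deriv (Aent (PhiSeq n k m) (n - m) n) y
          - Aent (PhiSeq n k m) (n - m - 1) n y := by
    show PhiSeq n k (m + 1) (m + 1) = _
    rw [PhiSeq, Function.update_self, dif_pos hmn]
  have hfin : (⟨n - m, by omega⟩ : Fin n) = ⟨i, hi2⟩ := Fin.ext hnm
  have hnm1 : n - m - 1 = i - 1 := by omega
  rw [h1, h2, hidx, h3, h4]
  simp only []
  rw [hfin, hnm]
  ring

section MulLemmas

variable {n : ℕ}

lemma mul_KhatM_apply (k : Fin n → ℝ → ℝ) (x : ℝ)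
    (G : Matrix (Fin (n + 1)) (Fin (n + 1)) ℝ) (i j : Fin (n + 1)) :
    (KhatM n k x * G) i j
      = (if h : (i : ℕ) < n then -k ⟨i, h⟩ x else 0) * G (Fin.last n) j
        + (if h : 1 ≤ (i : ℕ) then G ⟨(i : ℕ) - 1, by omega⟩ j else 0) := by
  rw [Matrix.mul_apply]
  rcases Nat.eq_zero_or_pos (i : ℕ) with hi | hi
  · have key : ∀ p : Fin (n + 1), KhatM n k x i p * G p j
        = if p = Fin.last n then (if h : (i : ℕ) < n then -k ⟨i, h⟩ x else 0) * G p j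
          else 0 := by
      intro p
      by_cases hp : p = Fin.last n
      · subst hp
        simp [KhatM]
      · have hpn : (p : ℕ) ≠ n := fun h => hp (Fin.ext (by simp [h]))
        rw [if_neg hp]
        simp only [KhatM, Matrix.of_apply, if_neg hpn]
        rw [if_neg (by omega)]
        ring
    rw [Finset.sum_congr rfl (fun p _ => key p), Finset.sum_ite_eq' Finset.univ,
      if_pos (Finset.mem_univ _), dif_neg (show ¬(1 ≤ (i : ℕ)) by omega)]
    ring
  · have hilt : (i : ℕ) - 1 < n + 1 := by omega
    have key : ∀ p : Fin (n + 1), KhatM n k x i p * G p j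
        = (if p = Fin.last n then (if h : (i : ℕ) < n then -k ⟨i, h⟩ x else 0) * G p j
            else 0)
          + (if p = (⟨(i : ℕ) - 1, hilt⟩ : Fin (n + 1)) then G p j else 0) := by
      intro p
      by_cases hp : p = Fin.last n
      · subst hp
        have hne : (Fin.last n : Fin (n + 1)) ≠ ⟨(i : ℕ) - 1, hilt⟩ := by
          intro h
          have hv := congrArg Fin.val h
          rw [Fin.val_last, Fin.val_mk] at hv
          omega
        rw [if_pos rfl, if_neg hne]
        simp [KhatM]
      · have hpn : (p : ℕ) ≠ n := fun h => hp (Fin.ext (by simp [h]))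
        rw [if_neg hp]
        simp only [KhatM, Matrix.of_apply, if_neg hpn]
        by_cases hpi : p = (⟨(i : ℕ) - 1, hilt⟩ : Fin (n + 1))
        · have hv : (p : ℕ) = (i : ℕ) - 1 := by rw [hpi, Fin.val_mk]
          rw [if_pos hpi, if_pos (show (i : ℕ) = (p : ℕ) + 1 by omega)]
          ring
        · have hv : (p : ℕ) ≠ (i : ℕ) - 1 := by
            intro h
            exact hpi (Fin.ext (by rw [Fin.val_mk]; exact h))
          rw [if_neg hpi, if_neg (show ¬((i : ℕ) = (p : ℕ) + 1) by omega)]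
          ring
    rw [Finset.sum_congr rfl (fun p _ => key p), Finset.sum_add_distrib,
      Finset.sum_ite_eq' Finset.univ, Finset.sum_ite_eq' Finset.univ,
      if_pos (Finset.mem_univ _), if_pos (Finset.mem_univ _),
      dif_pos (show 1 ≤ (i : ℕ) from hi)]

lemma mul_KcanM_apply (κ : Fin n → ℝ → ℝ) (x : ℝ)
    (G : Matrix (Fin (n + 1)) (Fin (n + 1)) ℝ) (i j : Fin (n + 1)) :
    (G * KcanM n κ x) i j
      = G i 0 * (if h : 1 ≤ (j : ℕ) then κ ⟨n - (j : ℕ), by have := j.isLt; omega⟩ x else 0)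
        + (if h : (j : ℕ) < n then G i ⟨(j : ℕ) + 1, by omega⟩ else 0) := by
  rw [Matrix.mul_apply]
  have hzero : ∀ p : Fin (n + 1), p = 0 →
      KcanM n κ x p j = (if h : 1 ≤ (j : ℕ) then
        κ ⟨n - (j : ℕ), by have := j.isLt; omega⟩ x else 0) := by
    intro p hp
    subst hp
    simp [KcanM]
  rcases Nat.lt_or_ge (j : ℕ) n with hj | hj
  · have hjlt : (j : ℕ) + 1 < n + 1 := by omega
    have key : ∀ p : Fin (n + 1), G i p * KcanM n κ x p j
        = (if p = (0 : Fin (n + 1)) then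
            G i p * (if h : 1 ≤ (j : ℕ) then
              κ ⟨n - (j : ℕ), by have := j.isLt; omega⟩ x else 0)
            else 0)
          + (if p = (⟨(j : ℕ) + 1, hjlt⟩ : Fin (n + 1)) then G i p else 0) := by
      intro p
      by_cases hp : p = (0 : Fin (n + 1))
      · have hne : p ≠ ⟨(j : ℕ) + 1, hjlt⟩ := by
          intro h
          rw [hp] at h
          have hv := congrArg Fin.val h
          rw [Fin.val_zero, Fin.val_mk] at hv
          omega
        rw [if_pos hp, if_neg hne, hzero p hp]
        ring
      · have hpz : (p : ℕ) ≠ 0 := fun h => hp (Fin.ext (by simpa using h))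
        rw [if_neg hp]
        simp only [KcanM, Matrix.of_apply, if_neg hpz]
        by_cases hpj : p = (⟨(j : ℕ) + 1, hjlt⟩ : Fin (n + 1))
        · have hv : (p : ℕ) = (j : ℕ) + 1 := by rw [hpj, Fin.val_mk]
          rw [if_pos hpj, if_pos hv]
          ring
        · have hv : (p : ℕ) ≠ (j : ℕ) + 1 := by
            intro h
            exact hpj (Fin.ext (by rw [Fin.val_mk]; exact h))
          rw [if_neg hpj, if_neg hv]
          ring
    rw [Finset.sum_congr rfl (fun p _ => key p), Finset.sum_add_distrib,
      Finset.sum_ite_eq' Finset.univ, Finset.sum_ite_eq' Finset.univ,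
      if_pos (Finset.mem_univ _), if_pos (Finset.mem_univ _), dif_pos hj]
  · have key : ∀ p : Fin (n + 1), G i p * KcanM n κ x p j
        = if p = (0 : Fin (n + 1)) then
            G i p * (if h : 1 ≤ (j : ℕ) then
              κ ⟨n - (j : ℕ), by have := j.isLt; omega⟩ x else 0)
          else 0 := by
      intro p
      by_cases hp : p = (0 : Fin (n + 1))
      · rw [if_pos hp, hzero p hp]
      · have hpz : (p : ℕ) ≠ 0 := fun h => hp (Fin.ext (by simpa using h))
        rw [if_neg hp]
        simp only [KcanM, Matrix.of_apply, if_neg hpz]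
        rw [if_neg (show ¬((p : ℕ) = (j : ℕ) + 1) by omega)]
        ring
    rw [Finset.sum_congr rfl (fun p _ => key p), Finset.sum_ite_eq' Finset.univ,
      if_pos (Finset.mem_univ _), dif_neg (show ¬((j : ℕ) < n) by omega)]
    ring

end MulLemmas

/-- Let `n ≥ 1` and `k_0, …, k_{n-1} : ℝ → ℝ` be smooth.  Then there
exist smooth functions `κ_0, …, κ_{n-1}` and a smooth map `g` into invertible upper
triangular matrices with unit diagonal such that `g'(x) + K̂(x)g(x) = g(x)K(x)` for all
`x`. -/
theorem stmt_12 (n : ℕ) (hn : 1 ≤ n) (k : Fin n → ℝ → ℝ)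
    (hk : ∀ i, ContDiff ℝ (⊤ : ℕ∞) (k i)) :
    ∃ (κ : Fin n → ℝ → ℝ) (g : ℝ → Matrix (Fin (n + 1)) (Fin (n + 1)) ℝ),
      (∀ i, ContDiff ℝ (⊤ : ℕ∞) (κ i)) ∧
      (∀ i j : Fin (n + 1), ContDiff ℝ (⊤ : ℕ∞) fun x => g x i j) ∧
      (∀ x : ℝ, IsUnit (g x)) ∧
      (∀ (x : ℝ) (i j : Fin (n + 1)), (j : ℕ) < (i : ℕ) → g x i j = 0) ∧
      (∀ (x : ℝ) (i : Fin (n + 1)), g x i i = 1) ∧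
      (∀ x : ℝ,
        (Matrix.of fun i j : Fin (n + 1) => deriv (fun t => g t i j) x) + KhatM n k x * g x
          = g x * KcanM n κ x) := by
  classical
  set φ : ℕ → ℝ → ℝ := phiF n k with hφdef
  have hφ0 : φ 0 = fun _ => 1 := phiF_zero n k
  have hφ1 : φ 1 = fun _ => 0 := phiF_one n k
  have hφsm : ∀ l, ContDiff ℝ (⊤ : ℕ∞) (φ l) := phiF_smooth n k hk
  set g : ℝ → Matrix (Fin (n + 1)) (Fin (n + 1)) ℝ :=
    fun x => Matrix.of fun i j : Fin (n + 1) => Aent φ (i : ℕ) (j : ℕ) x with hgdef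
  set κ : Fin n → ℝ → ℝ := fun p =>
    if (p : ℕ) = 0 then fun x => deriv (φ n) x - k ⟨0, hn⟩ x
    else fun x => deriv (φ (n - (p : ℕ))) x - φ (n - (p : ℕ) + 1) x with hκdef
  have hgtri : ∀ (x : ℝ) (i j : Fin (n + 1)), (j : ℕ) < (i : ℕ) → g x i j = 0 := by
    intro x i j hij
    show Aent φ (i : ℕ) (j : ℕ) x = 0
    rw [Aent_eq_zero φ (j : ℕ) (i : ℕ) hij]
  have hgdiag : ∀ (x : ℝ) (i : Fin (n + 1)), g x i i = 1 := by
    intro x i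
    show Aent φ (i : ℕ) (i : ℕ) x = 1
    rw [Aent_diag φ hφ0]
  refine ⟨κ, g, ?_, ?_, ?_, hgtri, hgdiag, ?_⟩
  · -- smoothness of κ
    intro p
    by_cases hp : (p : ℕ) = 0
    · simp only [hκdef, if_pos hp]
      exact ((contDiff_infty_iff_deriv.mp (hφsm n)).2).sub (hk _)
    · simp only [hκdef, if_neg hp]
      exact ((contDiff_infty_iff_deriv.mp (hφsm _)).2).sub (hφsm _)
  · -- smoothness of g entries
    intro i j
    exact Aent_smooth φ hφsm (j : ℕ) (i : ℕ)
  · -- invertibility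
    intro x
    have hdet : (g x).det = 1 := by
      rw [Matrix.det_of_upperTriangular (M := g x) (fun i j hij => hgtri x i j hij)]
      simp [hgdiag x]
    rw [Matrix.isUnit_iff_isUnit_det, hdet]
    exact isUnit_one
  · -- the gauge equation
    intro x
    ext i j
    rw [Matrix.add_apply, Matrix.of_apply, mul_KhatM_apply, mul_KcanM_apply]
    rw [show (fun t => g t i j) = Aent φ (i : ℕ) (j : ℕ) from rfl]
    rw [show g x (Fin.last n) j = Aent φ n (j : ℕ) x from rfl]
    rw [show g x i 0 = Aent φ (i : ℕ) 0 x from rfl]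
    rcases Nat.lt_or_ge (j : ℕ) n with hj | hj
    · -- j < n
      rw [dif_pos hj]
      rw [show g x i ⟨(j : ℕ) + 1, by omega⟩ = Aent φ (i : ℕ) ((j : ℕ) + 1) x from rfl]
      rw [show Aent φ n (j : ℕ) x = 0 by rw [Aent_eq_zero φ (j : ℕ) n hj]]
      rw [mul_zero, zero_add]
      rcases Nat.eq_zero_or_pos (i : ℕ) with hi | hi
      · -- i = 0
        rw [dif_neg (show ¬(1 ≤ (i : ℕ)) by omega), hi]
        rw [show Aent φ 0 0 x = 1 by rw [Aent_zero_right, if_pos rfl, hφ0]]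
        rw [one_mul]
        rcases Nat.eq_zero_or_pos (j : ℕ) with hjz | hjz
        · rw [dif_neg (show ¬(1 ≤ (j : ℕ)) by omega), hjz]
          rw [show Aent φ 0 (0 + 1) x = 0 by rw [Aent_zero_left, hφ1]]
          rw [show Aent φ 0 0 = fun _ => (1 : ℝ) by rw [Aent_zero_right, if_pos rfl, hφ0]]
          simp
        · rw [dif_pos (show 1 ≤ (j : ℕ) by omega)]
          have hκv : κ ⟨n - (j : ℕ), by have := j.isLt; omega⟩ x
              = deriv (φ (j : ℕ)) x - φ ((j : ℕ) + 1) x := by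
            rw [hκdef]
            simp only [Fin.val_mk]
            rw [if_neg (show ¬(n - (j : ℕ) = 0) by omega)]
            rw [show n - (n - (j : ℕ)) = (j : ℕ) by omega]
          rw [hκv]
          obtain ⟨j', hj'⟩ : ∃ j', (j : ℕ) = j' + 1 := ⟨(j : ℕ) - 1, by omega⟩
          rw [hj', Aent_zero_left, Aent_zero_left]
          ring
      · -- i ≥ 1
        rw [dif_pos (show 1 ≤ (i : ℕ) by omega)]
        rw [show g x ⟨(i : ℕ) - 1, by omega⟩ j = Aent φ ((i : ℕ) - 1) (j : ℕ) x from rfl]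
        rw [show Aent φ (i : ℕ) 0 x = 0 by rw [Aent_zero_right, if_neg (by omega)]]
        rw [zero_mul, zero_add]
        obtain ⟨i', hi'⟩ : ∃ i', (i : ℕ) = i' + 1 := ⟨(i : ℕ) - 1, by omega⟩
        rw [hi', show i' + 1 - 1 = i' by omega]
        simp only [Aent_succ_succ]
        ring
    · -- j = n
      have hjn : (j : ℕ) = n := by omega
      rw [dif_neg (show ¬((j : ℕ) < n) by omega), dif_pos (show 1 ≤ (j : ℕ) by omega)]
      have hκ0 : κ ⟨n - (j : ℕ), by have := j.isLt; omega⟩ x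
          = deriv (φ n) x - k ⟨0, hn⟩ x := by
        rw [hκdef]
        simp only [Fin.val_mk]
        rw [if_pos (show n - (j : ℕ) = 0 by omega)]
      rw [hκ0, hjn]
      rw [show Aent φ n n x = 1 by rw [Aent_diag φ hφ0]]
      rw [mul_one, add_zero]
      rcases Nat.eq_zero_or_pos (i : ℕ) with hi | hi
      · -- i = 0 : definition of κ₀
        have hiln : (i : ℕ) < n := by omega
        rw [dif_pos hiln, dif_neg (show ¬(1 ≤ (i : ℕ)) by omega)]
        rw [show (⟨(i : ℕ), hiln⟩ : Fin n) = ⟨0, hn⟩ from Fin.ext hi]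
        rw [hi]
        rw [show Aent φ 0 0 x = 1 by rw [Aent_zero_right, if_pos rfl, hφ0]]
        rw [show Aent φ 0 n = φ n by
          obtain ⟨n', rfl⟩ : ∃ n', n = n' + 1 := ⟨n - 1, by omega⟩
          exact Aent_zero_left φ n']
        ring
      · rcases Nat.lt_or_ge (i : ℕ) n with hin | hin
        · -- 1 ≤ i < n : the compatibility constraint
          rw [dif_pos hin, dif_pos (show 1 ≤ (i : ℕ) by omega)]
          rw [show g x ⟨(i : ℕ) - 1, by omega⟩ j = Aent φ ((i : ℕ) - 1) (j : ℕ) x from rfl]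
          rw [hjn]
          rw [show Aent φ (i : ℕ) 0 x = 0 by rw [Aent_zero_right, if_neg (by omega)]]
          rw [zero_mul]
          have hc := Aent_constraint n k (i : ℕ) hi hin x
          rw [hφdef]
          linarith [hc]
        · -- i = n
          have hin' : (i : ℕ) = n := by omega
          rw [dif_neg (show ¬((i : ℕ) < n) by omega), dif_pos (show 1 ≤ (i : ℕ) by omega)]
          rw [show g x ⟨(i : ℕ) - 1, by omega⟩ j = Aent φ ((i : ℕ) - 1) (j : ℕ) x from rfl]
          rw [hjn, hin']
          rw [show Aent φ n 0 x = 0 by rw [Aent_zero_right, if_neg (by omega)]]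
          rw [zero_mul]
          rw [show Aent φ n n = fun _ => (1 : ℝ) from Aent_diag φ hφ0 n]
          rw [show Aent φ (n - 1) n x = 0 by
            obtain ⟨n', rfl⟩ : ∃ n', n = n' + 1 := ⟨n - 1, by omega⟩
            rw [show n' + 1 - 1 = n' by omega]
            rw [Aent_superdiag φ hφ0 hφ1 n']]
          simp
end

section
/- Let k_0, k_1, k_2: ℝ → ℝ be smooth functions. Define κ_2 = −k_2, κ_1 = 2k_2' − k_1, κ_0 = k_1' − k_2'' − k_0, and define the 4×4 matrix-valued functions K̂ = [[0,0,0,−k_0],[1,0,0,−k_1],[0,1,0,−k_2],[0,0,1,0]], K = [[0,κ_2,κ_1,κ_0],[1,0,0,0],[0,1,0,0],[0,0,1,0]], and g = [[1,0,k_2,k_1−k_2'],[0,1,0,k_2],[0,0,1,0],[0,0,0,1]]. Then g'(x) + K̂(x)g(x) = g(x)K(x) for all x ∈ ℝ. -/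
/-- The gauge matrix `g` in the `ℝP³` case. -/
noncomputable def g13 (k1 k2 : ℝ → ℝ) (t : ℝ) : Matrix (Fin 4) (Fin 4) ℝ :=
  !![1, 0, k2 t, k1 t - deriv k2 t;
     0, 1, 0, k2 t;
     0, 0, 1, 0;
     0, 0, 0, 1]

/-- The Wilczynski Maurer–Cartan matrix `K̂` in the `ℝP³` case. -/
noncomputable def Khat13 (k0 k1 k2 : ℝ → ℝ) (t : ℝ) : Matrix (Fin 4) (Fin 4) ℝ :=
  !![0, 0, 0, -k0 t;
     1, 0, 0, -k1 t;
     0, 1, 0, -k2 t;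
     0, 0, 1, 0]

/-- The canonical matrix `K` in the `ℝP³` case, with `κ₂ = −k₂`, `κ₁ = 2k₂' − k₁`,
`κ₀ = k₁' − k₂'' − k₀`. -/
noncomputable def K13 (k0 k1 k2 : ℝ → ℝ) (t : ℝ) : Matrix (Fin 4) (Fin 4) ℝ :=
  !![0, -k2 t, 2 * deriv k2 t - k1 t, deriv k1 t - deriv (deriv k2) t - k0 t;
     1, 0, 0, 0;
     0, 1, 0, 0;
     0, 0, 1, 0]

theorem deriv_g13_entries {k1 k2 : ℝ → ℝ} {x : ℝ} (hk1 : DifferentiableAt ℝ k1 x)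
    (hk2' : DifferentiableAt ℝ (deriv k2) x) :
    (Matrix.of fun i j : Fin 4 => deriv (fun t => g13 k1 k2 t i j) x) =
      !![0, 0, deriv k2 x, deriv k1 x - deriv (deriv k2) x;
         0, 0, 0, deriv k2 x;
         0, 0, 0, 0;
         0, 0, 0, 0] := by
  ext i j
  fin_cases i <;> fin_cases j <;> simp [g13, deriv_fun_sub hk1 hk2']

theorem gauge_identity_rp3 (k0 k1 k2 k1' k2' k2'' : ℝ) :
    !![0, 0, k2', k1' - k2''; 0, 0, 0, k2'; 0, 0, 0, 0; 0, 0, 0, 0] +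
        !![0, 0, 0, -k0; 1, 0, 0, -k1; 0, 1, 0, -k2; 0, 0, 1, 0] *
          !![1, 0, k2, k1 - k2'; 0, 1, 0, k2; 0, 0, 1, 0; 0, 0, 0, 1] =
      !![1, 0, k2, k1 - k2'; 0, 1, 0, k2; 0, 0, 1, 0; 0, 0, 0, 1] *
        !![0, -k2, 2 * k2' - k1, k1' - k2'' - k0; 1, 0, 0, 0; 0, 1, 0, 0; 0, 0, 1, 0] := by
  ext i j
  fin_cases i <;> fin_cases j <;> simp [Matrix.mul_apply, Fin.sum_univ_four] <;> ring

theorem stmt_13_general (k0 k1 k2 : ℝ → ℝ)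
    (h1 : ContDiff ℝ (⊤ : ℕ∞) k1) (h2 : ContDiff ℝ (⊤ : ℕ∞) k2) :
    ∀ x : ℝ,
      (Matrix.of fun i j : Fin 4 => deriv (fun t => g13 k1 k2 t i j) x)
          + Khat13 k0 k1 k2 x * g13 k1 k2 x
        = g13 k1 k2 x * K13 k0 k1 k2 x := by
  intro x
  have hk1 : DifferentiableAt ℝ k1 x := h1.differentiable (by simp) x
  have hk2' : DifferentiableAt ℝ (deriv k2) x :=
    (contDiff_infty_iff_deriv.mp h2).2.differentiable (by simp) x
  rw [deriv_g13_entries hk1 hk2']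
  exact gauge_identity_rp3 _ _ _ _ _ _

/-- For smooth `k₀, k₁, k₂ : ℝ → ℝ`, the explicit gauge relation
`g'(x) + K̂(x)g(x) = g(x)K(x)` holds for all `x ∈ ℝ`. -/
theorem stmt_13 (k0 k1 k2 : ℝ → ℝ) (h0 : ContDiff ℝ (⊤ : ℕ∞) k0)
    (h1 : ContDiff ℝ (⊤ : ℕ∞) k1) (h2 : ContDiff ℝ (⊤ : ℕ∞) k2) :
    ∀ x : ℝ,
      (Matrix.of fun i j : Fin 4 => deriv (fun t => g13 k1 k2 t i j) x)
          + Khat13 k0 k1 k2 x * g13 k1 k2 x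
        = g13 k1 k2 x * K13 k0 k1 k2 x :=
  stmt_13_general k0 k1 k2 h1 h2
end
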